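/- arXiv:2604.10712 — 5 statements merged into one kernel-verified Lean document; each statement's English description precedes it below -/
import Mathlib

section
/- Let $T$ be a $\{-1,1\}$-valued random variable, $X$ a random variable, and $R$ an integrable random variable, with $\pi(t, x) = P(T = t \mid X = x) > 0$. For any measurable decision rule $d: \mathcal{X} \to \{-1, 1\}$, under the assumption that the conditional distribution of $R$ given $(X, T)$ has mean $Q(X, T)$, the inverse-probability-weighted quantity satisfies $\mathbb{E}\left[\frac{R\, \mathbb{1}\{T = d(X)\}}{\pi(T, X)}\right] = \mathbb{E}\left[Q(X, d(X))\right]$. -/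
/-!
For each arm `t = ±1`, test the conditional-mean identity for `Q` against the function
`1{d = t} / π(t, ·)`, which is bounded by `1/ε`. Since `π` cancels on the right, this gives
`E[R 1{T = t} 1{d(X) = t} / π(t, X)] = E[Q(X, t) 1{d(X) = t}]`, and summing over both arms
gives the claim. Splitting the integral of `Q(X, d(X))` into arms requires each arm to be
integrable. This holds because a function `g(X)` with the same tested integrals as an
integrable `F` has truncations `|g| 1{|g| ≤ n}` (obtained with the test
`sign g · 1{|g| ≤ n}`) whose integrals are at most `E|F|`; monotone convergence then bounds
`E|g(X)|`.
-/

open MeasureTheory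

theorem integrable_of_setIntegral_abs_le {α : Type*} [MeasurableSpace α] {μ : Measure α}
    [IsFiniteMeasure μ] {f : α → ℝ} (hf : Measurable f) {C : ℝ}
    (hC : ∀ n : ℕ, ∫ a in {a | |f a| ≤ n}, |f a| ∂μ ≤ C) : Integrable f μ := by
  set S : ℕ → Set α := fun n => {a | |f a| ≤ n}
  have hS : ∀ n, MeasurableSet (S n) := fun n => measurableSet_le hf.abs measurable_const
  have hS_mono : Monotone S := fun m n hmn a (ha : |f a| ≤ m) =>
    ha.trans (Nat.cast_le.mpr hmn)
  have hS_union : ⋃ n, S n = Set.univ :=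
    Set.eq_univ_of_forall fun a => Set.mem_iUnion.mpr (exists_nat_ge |f a|)
  have hS_lintegral : ∀ n, ∫⁻ a in S n, ENNReal.ofReal |f a| ∂μ ≤ ENNReal.ofReal C := by
    intro n
    have hint : IntegrableOn (fun a => |f a|) (S n) μ :=
      IntegrableOn.of_bound (measure_lt_top μ _) hf.abs.aestronglyMeasurable n
        (ae_restrict_of_forall_mem (hS n) fun a ha => by rw [Real.norm_eq_abs, abs_abs]; exact ha)
    rw [← ofReal_integral_eq_lintegral_ofReal hint (ae_of_all _ fun a => abs_nonneg _)]
    exact ENNReal.ofReal_le_ofReal (hC n)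
  refine ⟨hf.aestronglyMeasurable, (hasFiniteIntegral_iff_norm f).mpr ?_⟩
  calc ∫⁻ a, ENNReal.ofReal ‖f a‖ ∂μ = ∫⁻ a in ⋃ n, S n, ENNReal.ofReal |f a| ∂μ := by
        rw [hS_union, Measure.restrict_univ]; rfl
    _ = ⨆ n, ∫⁻ a in S n, ENNReal.ofReal |f a| ∂μ :=
        setLIntegral_iUnion_of_directed _ hS_mono.directed_le
    _ ≤ ENNReal.ofReal C := iSup_le hS_lintegral
    _ < ⊤ := ENNReal.ofReal_lt_top

theorem integral_mul_le_integral_abs {α : Type*} [MeasurableSpace α] {μ : Measure α}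
    {f g : α → ℝ} (hf : Integrable f μ) (hg : ∀ a, |g a| ≤ 1) :
    ∫ a, f a * g a ∂μ ≤ ∫ a, |f a| ∂μ :=
  (Real.le_norm_self _).trans <| norm_integral_le_of_norm_le hf.abs <| ae_of_all _ fun a => by
    rw [Real.norm_eq_abs, abs_mul]
    exact mul_le_of_le_one_right (abs_nonneg (f a)) (hg a)

theorem abs_div_le_inv_of_abs_le_one {a b ε : ℝ} (ha : |a| ≤ 1) (hε : 0 < ε) (hb : ε ≤ b) :
    |a / b| ≤ ε⁻¹ := by
  have hb0 : 0 < b := hε.trans_le hb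
  rw [abs_div, abs_of_pos hb0, ← one_div]
  calc |a| / b ≤ 1 / b := div_le_div_of_nonneg_right ha hb0.le
    _ ≤ 1 / ε := one_div_le_one_div_of_le hε hb

/-- `E[F | X] = E[G | X]` in weak form: equal integrals against all measurable functions of `X`
bounded by one. -/
def AgreeOnTests {Ω 𝓧 : Type*} [MeasurableSpace Ω] [MeasurableSpace 𝓧] (μ : Measure Ω)
    (X : Ω → 𝓧) (F G : Ω → ℝ) : Prop :=
  ∀ h : 𝓧 → ℝ, Measurable h → (∀ x, |h x| ≤ 1) →
    ∫ ω, F ω * h (X ω) ∂μ = ∫ ω, G ω * h (X ω) ∂μ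

namespace AgreeOnTests

variable {Ω 𝓧 : Type*} [MeasurableSpace Ω] [MeasurableSpace 𝓧] {μ : Measure Ω} {X : Ω → 𝓧}
  {F G : Ω → ℝ}

theorem integral_eq (h : AgreeOnTests μ X F G) : ∫ ω, F ω ∂μ = ∫ ω, G ω ∂μ := by
  simpa using h (fun _ => 1) measurable_const (fun _ => by simp)

theorem mul_comp (h : AgreeOnTests μ X F G) {k : 𝓧 → ℝ} (hk : Measurable k) {M : ℝ}
    (hkM : ∀ x, |k x| ≤ M) :
    AgreeOnTests μ X (fun ω => F ω * k (X ω)) (fun ω => G ω * k (X ω)) := by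
  intro φ hφ hφ1
  set c := max M 1
  have hc : 0 < c := zero_lt_one.trans_le (le_max_right M 1)
  have hψ1 : ∀ x, |φ x * k x / c| ≤ 1 := fun x => by
    rw [abs_div, abs_of_pos hc, div_le_one hc, abs_mul]
    calc |φ x| * |k x| ≤ 1 * M := mul_le_mul (hφ1 x) (hkM x) (abs_nonneg _) zero_le_one
      _ ≤ c := by rw [one_mul]; exact le_max_left M 1
  have key := h (fun x => φ x * k x / c) ((hφ.mul hk).div_const c) hψ1
  have hrw : ∀ H : Ω → ℝ, (fun ω => H ω * (φ (X ω) * k (X ω) / c))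
      = fun ω => H ω * k (X ω) * φ (X ω) / c := fun H => funext fun ω => by ring
  simp only [hrw, integral_div] at key
  exact (div_left_inj' hc.ne').mp key

theorem mul_comp_div {k p q : 𝓧 → ℝ} (h : AgreeOnTests μ X F (fun ω => q (X ω) * p (X ω)))
    (hk : Measurable k) (hk1 : ∀ x, |k x| ≤ 1) (hp : Measurable p) {ε : ℝ} (hε : 0 < ε)
    (hpε : ∀ x, ε ≤ p x) :
    AgreeOnTests μ X (fun ω => F ω * (k (X ω) / p (X ω))) (fun ω => q (X ω) * k (X ω)) := by
  have hcancel : (fun ω => q (X ω) * p (X ω) * (k (X ω) / p (X ω)))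
      = fun ω => q (X ω) * k (X ω) := funext fun ω => by
    field_simp [(hε.trans_le (hpε (X ω))).ne']
  simpa only [hcancel] using h.mul_comp (k := fun x => k x / p x) (hk.div hp)
    fun x => abs_div_le_inv_of_abs_le_one (hk1 x) hε (hpε x)

theorem integrable_comp [IsFiniteMeasure μ] {g : 𝓧 → ℝ}
    (h : AgreeOnTests μ X F (fun ω => g (X ω))) (hF : Integrable F μ) (hX : Measurable X)
    (hg : Measurable g) : Integrable (fun ω => g (X ω)) μ := by
  refine integrable_of_setIntegral_abs_le (hg.comp hX) (C := ∫ ω, |F ω| ∂μ) fun n => ?_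
  set S : Set 𝓧 := {x | |g x| ≤ n}
  have hS : MeasurableSet S := measurableSet_le hg.abs measurable_const
  set φ : 𝓧 → ℝ := S.indicator fun x => g x / |g x|
  have hφ1 : ∀ x, |φ x| ≤ 1 := fun x => by
    by_cases hx : x ∈ S
    · simp only [φ, Set.indicator_of_mem hx, abs_div, abs_abs]; exact div_self_le_one _
    · simp [φ, hx]
  have hgφ : ∀ x, g x * φ x = S.indicator (fun x => |g x|) x := fun x => by
    by_cases hx : x ∈ S
    · simp only [φ, Set.indicator_of_mem hx]
      rw [mul_div_assoc', ← sq, ← sq_abs, sq, mul_self_div_self]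
    · simp [φ, hx]
  calc ∫ ω in {ω | |g (X ω)| ≤ n}, |g (X ω)| ∂μ
      = ∫ ω, (X ⁻¹' S).indicator (fun ω => |g (X ω)|) ω ∂μ := (integral_indicator (hX hS)).symm
    _ = ∫ ω, g (X ω) * φ (X ω) ∂μ := by
        simp_rw [hgφ, ← Set.indicator_comp_right]
        rfl
    _ = ∫ ω, F ω * φ (X ω) ∂μ :=
        (h φ (((hg.div hg.abs).indicator hS)) hφ1).symm
    _ ≤ ∫ ω, |F ω| ∂μ := integral_mul_le_integral_abs hF fun ω => hφ1 (X ω)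

end AgreeOnTests

theorem ipw_value_identity_general
    {Ω 𝓧 : Type*} [MeasurableSpace Ω] [MeasurableSpace 𝓧]
    (μ : Measure Ω) [IsProbabilityMeasure μ]
    (X : Ω → 𝓧) (T : Ω → ℝ) (R : Ω → ℝ)
    (hX : Measurable X) (hT : Measurable T) (hR : Integrable R μ)
    (hTval : ∀ ω, T ω = 1 ∨ T ω = -1)
    (π : ℝ → 𝓧 → ℝ) (Q : 𝓧 → ℝ → ℝ)
    (hπmeas : ∀ t, Measurable (π t)) (hQmeas : ∀ t, Measurable (fun x => Q x t))
    (ε : ℝ) (hε : 0 < ε)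
    (hpos : ∀ x, ∀ t : ℝ, (t = 1 ∨ t = -1) → ε ≤ π t x)
    -- Q is the conditional mean of R given X and T:
    (hQ : ∀ t : ℝ, (t = 1 ∨ t = -1) → ∀ h : 𝓧 → ℝ, Measurable h → (∀ x, |h x| ≤ 1) →
      ∫ ω, R ω * (if T ω = t then (1 : ℝ) else 0) * h (X ω) ∂μ
        = ∫ ω, Q (X ω) t * π t (X ω) * h (X ω) ∂μ)
    (d : 𝓧 → ℝ) (hd : Measurable d) (hdval : ∀ x, d x = 1 ∨ d x = -1) :
    ∫ ω, R ω * (if T ω = d (X ω) then (1 : ℝ) else 0) / π (T ω) (X ω) ∂μ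
      = ∫ ω, Q (X ω) (d (X ω)) ∂μ := by
  set F : ℝ → Ω → ℝ := fun t ω =>
    R ω * (if T ω = t then 1 else 0) * ((if d (X ω) = t then 1 else 0) / π t (X ω))
  set G : ℝ → Ω → ℝ := fun t ω => Q (X ω) t * (if d (X ω) = t then 1 else 0)
  have hind : ∀ t, Measurable fun x => if d x = t then (1 : ℝ) else 0 := fun t =>
    Measurable.ite (hd (measurableSet_singleton t)) measurable_const measurable_const
  have hind1 : ∀ t x, |if d x = t then (1 : ℝ) else 0| ≤ 1 := fun t x => by split_ifs <;> simp
  have harm : ∀ t, (t = 1 ∨ t = -1) → AgreeOnTests μ X (F t) (G t) := fun t ht =>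
    have hQt : AgreeOnTests μ X (fun ω => R ω * (if T ω = t then 1 else 0))
        (fun ω => Q (X ω) t * π t (X ω)) := hQ t ht
    hQt.mul_comp_div (q := fun x => Q x t) (hind t) (hind1 t) (hπmeas t) hε (hpos · t ht)
  have hF : ∀ t, (t = 1 ∨ t = -1) → Integrable (F t) μ := fun t ht =>
    (hR.mul_bdd (c := 1)
      (Measurable.ite (hT (measurableSet_singleton t)) measurable_const
        measurable_const).aestronglyMeasurable
      (ae_of_all _ fun ω => by split_ifs <;> simp)).mul_bdd
      (((hind t).div (hπmeas t)).comp hX).aestronglyMeasurable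
      (ae_of_all _ fun ω => abs_div_le_inv_of_abs_le_one (hind1 t _) hε (hpos _ t ht))
  have hG : ∀ t, (t = 1 ∨ t = -1) → Integrable (G t) μ := fun t ht =>
    (harm t ht).integrable_comp (hF t ht) hX ((hQmeas t).mul (hind t))
  have hne : (1 : ℝ) ≠ -1 := by norm_num
  calc ∫ ω, R ω * (if T ω = d (X ω) then (1 : ℝ) else 0) / π (T ω) (X ω) ∂μ
      = ∫ ω, F 1 ω + F (-1) ω ∂μ := integral_congr_ae <| ae_of_all _ fun ω => by
        rcases hTval ω with hT1 | hT1 <;> rcases hdval (X ω) with hd1 | hd1 <;>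
          simp [F, hT1, hd1, hne, hne.symm, div_eq_mul_inv]
    _ = ∫ ω, G 1 ω + G (-1) ω ∂μ := by
        rw [integral_add (hF 1 (.inl rfl)) (hF (-1) (.inr rfl)),
          integral_add (hG 1 (.inl rfl)) (hG (-1) (.inr rfl)),
          (harm 1 (.inl rfl)).integral_eq, (harm (-1) (.inr rfl)).integral_eq]
    _ = ∫ ω, Q (X ω) (d (X ω)) ∂μ := integral_congr_ae <| ae_of_all _ fun ω => by
        rcases hdval (X ω) with hd1 | hd1 <;> simp [G, hd1, hne, hne.symm]

/-- IPW identity for the value function: if `π(t,x) = P(T = t | X = x) ≥ ε > 0` and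
`Q(x,t) = E[R | X = x, T = t]` (both characterized via bounded test functions), then
`E[ R 1{T = d(X)} / π(T, X) ] = E[ Q(X, d(X)) ]` for any measurable rule `d : 𝓧 → {-1,1}`. -/
theorem ipw_value_identity
    {Ω 𝓧 : Type*} [MeasurableSpace Ω] [MeasurableSpace 𝓧]
    (μ : Measure Ω) [IsProbabilityMeasure μ]
    (X : Ω → 𝓧) (T : Ω → ℝ) (R : Ω → ℝ)
    (hX : Measurable X) (hT : Measurable T) (hR : Integrable R μ)
    (hTval : ∀ ω, T ω = 1 ∨ T ω = -1)
    (π : ℝ → 𝓧 → ℝ) (Q : 𝓧 → ℝ → ℝ)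
    (hπmeas : ∀ t, Measurable (π t)) (hQmeas : ∀ t, Measurable (fun x => Q x t))
    (ε : ℝ) (hε : 0 < ε)
    (hpos : ∀ x, ∀ t : ℝ, (t = 1 ∨ t = -1) → ε ≤ π t x)
    -- π is the conditional probability of T = t given X:
    (hπ : ∀ t : ℝ, (t = 1 ∨ t = -1) → ∀ h : 𝓧 → ℝ, Measurable h → (∀ x, |h x| ≤ 1) →
      ∫ ω, (if T ω = t then (1 : ℝ) else 0) * h (X ω) ∂μ
        = ∫ ω, π t (X ω) * h (X ω) ∂μ)
    -- Q is the conditional mean of R given X and T: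
    (hQ : ∀ t : ℝ, (t = 1 ∨ t = -1) → ∀ h : 𝓧 → ℝ, Measurable h → (∀ x, |h x| ≤ 1) →
      ∫ ω, R ω * (if T ω = t then (1 : ℝ) else 0) * h (X ω) ∂μ
        = ∫ ω, Q (X ω) t * π t (X ω) * h (X ω) ∂μ)
    (d : 𝓧 → ℝ) (hd : Measurable d) (hdval : ∀ x, d x = 1 ∨ d x = -1) :
    ∫ ω, R ω * (if T ω = d (X ω) then (1 : ℝ) else 0) / π (T ω) (X ω) ∂μ
      = ∫ ω, Q (X ω) (d (X ω)) ∂μ :=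
  ipw_value_identity_general μ X T R hX hT hR hTval π Q hπmeas hQmeas ε hε hpos hQ d hd hdval
end

section
/- Under the setup of the doubly robust identity, maximizing the augmented value $\mathbb{E}\left[\frac{\{R - m(X,d)\}\mathbb{1}\{T = d(X)\}}{\pi(T,X)} + m(X,d)\right]$ over decision rules $d$ is equivalent to minimizing the weighted misclassification risk $\mathbb{E}\left[\frac{\{R - g(X)\}\mathbb{1}\{T \neq d(X)\}}{\pi(T,X)}\right]$: their sum equals a constant $\mathbb{E}\left[\frac{R - g(X)}{\pi(T,X)} + Q(X,-T)\right]$ not depending on $d$. -/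
open MeasureTheory

/-- The augmented value plus the `g`-residualized weighted misclassification risk equals
a constant not depending on the rule `d`:
`E[(R - m(X,d)) 1{T = d(X)}/π(T,X) + m(X,d)] + E[(R - g(X)) 1{T ≠ d(X)}/π(T,X)]
  = E[(R - g(X))/π(T,X) + Q(X,-T)]`,
so maximizing the augmented value is equivalent to minimizing the weighted risk. -/
theorem augmented_value_weighted_risk_duality
    {Ω 𝓧 : Type*} [MeasurableSpace Ω] [MeasurableSpace 𝓧]
    (μ : Measure Ω) [IsProbabilityMeasure μ]
    (X : Ω → 𝓧) (T : Ω → ℝ) (R : Ω → ℝ)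
    (hX : Measurable X) (hT : Measurable T) (hR : Integrable R μ)
    (hTval : ∀ ω, T ω = 1 ∨ T ω = -1)
    (π : ℝ → 𝓧 → ℝ) (Q : 𝓧 → ℝ → ℝ)
    (hπmeas : ∀ t, Measurable (π t)) (hQmeas : ∀ t, Measurable (fun x => Q x t))
    (ε : ℝ) (hε : 0 < ε)
    (hpos : ∀ x, ∀ t : ℝ, (t = 1 ∨ t = -1) → ε ≤ π t x ∧ π t x ≤ 1 - ε)
    (hπsum : ∀ x, π 1 x + π (-1) x = 1)
    (d : 𝓧 → ℝ) (hd : Measurable d) (hdval : ∀ x, d x = 1 ∨ d x = -1)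
    -- abbreviations
    (m : 𝓧 → ℝ) (g : 𝓧 → ℝ)
    (hm : ∀ x, m x = Q x 1 * (if d x = 1 then (1 : ℝ) else 0)
        + Q x (-1) * (if d x = -1 then (1 : ℝ) else 0))
    (hg : ∀ x, g x = Q x 1 * π (-1) x + Q x (-1) * π 1 x)
    -- integrability of the three integrands
    (h1 : Integrable (fun ω =>
      (R ω - m (X ω)) * (if T ω = d (X ω) then (1 : ℝ) else 0) / π (T ω) (X ω) + m (X ω)) μ)
    (h2 : Integrable (fun ω =>
      (R ω - g (X ω)) * (if T ω ≠ d (X ω) then (1 : ℝ) else 0) / π (T ω) (X ω)) μ)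
    (h3 : Integrable (fun ω =>
      (R ω - g (X ω)) / π (T ω) (X ω) + Q (X ω) (-(T ω))) μ) :
    (∫ ω, ((R ω - m (X ω)) * (if T ω = d (X ω) then (1 : ℝ) else 0) / π (T ω) (X ω)
        + m (X ω)) ∂μ)
      + (∫ ω, (R ω - g (X ω)) * (if T ω ≠ d (X ω) then (1 : ℝ) else 0) / π (T ω) (X ω) ∂μ)
    = ∫ ω, ((R ω - g (X ω)) / π (T ω) (X ω) + Q (X ω) (-(T ω))) ∂μ := by
  rw [← integral_add h1 h2]
  refine integral_congr_ae (Filter.Eventually.of_forall fun ω => ?_)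
  have hπ1 : (0:ℝ) < π 1 (X ω) := lt_of_lt_of_le hε (hpos _ 1 (Or.inl rfl)).1
  have hπm1 : (0:ℝ) < π (-1) (X ω) := lt_of_lt_of_le hε (hpos _ (-1) (Or.inr rfl)).1
  have hsum := hπsum (X ω)
  have hgx := hg (X ω)
  have hmx := hm (X ω)
  rcases hTval ω with hT1 | hT1 <;> rcases hdval (X ω) with hd1 | hd1 <;>
    rw [hd1] at hmx <;> simp only [hT1, hd1] <;> norm_num at hmx ⊢ <;>
  · have hm1 : π (-1) (X ω) = 1 - π 1 (X ω) := by linarith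
    rw [hmx, hgx, hm1]
    have hπ1' : π 1 (X ω) ≠ 0 := ne_of_gt hπ1
    have hπm1' : (1:ℝ) - π 1 (X ω) ≠ 0 := by rw [← hm1]; exact ne_of_gt hπm1
    field_simp
    ring
end

section
/- Let $f^*(x) = Q(x,1) - Q(x,-1)$ and define the weighted 0-1 risk $\mathcal{R}(f) = \mathbb{E}\left[\frac{R\,\mathbb{1}\{T f(X) < 0\}}{\pi(T,X)}\right]$ for measurable $f: \mathcal{X} \to \mathbb{R}$ that is nonzero a.s. If $R \geq 0$ a.s., then the Bayes rule $f^*$ minimizes $\mathcal{R}$ over all such $f$: $\mathcal{R}(f) - \mathcal{R}(f^*) = \mathbb{E}\left[|f^*(X)| \,\mathbb{1}\{f(X) f^*(X) < 0\}\right] \geq 0$. -/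
open MeasureTheory

lemma integrable_mul_of_bdd {Ω : Type*} [MeasurableSpace Ω] {μ : Measure Ω} {g : Ω → ℝ}
    (hg : Integrable g μ) {u : Ω → ℝ} (hu : AEStronglyMeasurable u μ) (hbd : ∀ ω, |u ω| ≤ 1) :
    Integrable (fun ω => g ω * u ω) μ := by
  refine hg.mono (hg.1.mul hu) (ae_of_all _ fun ω => ?_)
  rw [norm_mul]
  calc ‖g ω‖ * ‖u ω‖ ≤ ‖g ω‖ * 1 := by
        exact mul_le_mul_of_nonneg_left (by simpa [Real.norm_eq_abs] using hbd ω) (norm_nonneg _)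
    _ = ‖g ω‖ := mul_one _

lemma integrable_of_trunc {Ω : Type*} [MeasurableSpace Ω] (μ : Measure Ω) [IsFiniteMeasure μ]
    (g : Ω → ℝ) (hg : Measurable g) (C : ℝ)
    (hC : ∀ n : ℕ, ∫ ω, |g ω| * (if |g ω| ≤ (n : ℝ) then 1 else 0) ∂μ ≤ C) :
    Integrable g μ := by
  set F : ℕ → Ω → ℝ := fun n ω => |g ω| * (if |g ω| ≤ (n : ℝ) then 1 else 0) with hF
  have hFmeas : ∀ n, Measurable (F n) := fun n =>
    hg.abs.mul (Measurable.ite (measurableSet_le hg.abs measurable_const)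
      measurable_const measurable_const)
  have hFnonneg : ∀ n ω, 0 ≤ F n ω := fun n ω =>
    mul_nonneg (abs_nonneg _) (by split_ifs <;> norm_num)
  have hFint : ∀ n, Integrable (F n) μ := by
    intro n
    refine ⟨(hFmeas n).aestronglyMeasurable, HasFiniteIntegral.of_bounded (C := (n : ℝ))
      (ae_of_all _ fun ω => ?_)⟩
    rw [Real.norm_eq_abs, abs_of_nonneg (hFnonneg n ω)]
    simp only [hF]
    split_ifs with h
    · simpa using h
    · simp
  have hmono : Monotone fun n ω => ENNReal.ofReal (F n ω) := by
    intro m n hmn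
    refine fun ω => ENNReal.ofReal_le_ofReal ?_
    simp only [hF]
    split_ifs with h1 h2
    · exact le_rfl
    · exact absurd (h1.trans (by exact_mod_cast hmn)) h2
    · simpa using mul_nonneg (abs_nonneg (g ω)) zero_le_one
    · exact le_rfl
  have hsup : ∀ ω, (⨆ n : ℕ, ENNReal.ofReal (F n ω)) = ENNReal.ofReal |g ω| := by
    intro ω
    apply le_antisymm
    · refine iSup_le fun n => ENNReal.ofReal_le_ofReal ?_
      simp only [hF]
      split_ifs <;> simp [abs_nonneg]
    · obtain ⟨n, hn⟩ := exists_nat_ge (|g ω|)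
      refine le_trans (le_of_eq ?_) (le_iSup _ n)
      simp only [hF, if_pos hn, mul_one]
  refine ⟨hg.aestronglyMeasurable, ?_⟩
  rw [hasFiniteIntegral_iff_norm]
  have heq : ∫⁻ ω, ENNReal.ofReal ‖g ω‖ ∂μ = ⨆ n : ℕ, ∫⁻ ω, ENNReal.ofReal (F n ω) ∂μ := by
    rw [← lintegral_iSup (fun n => (hFmeas n).ennreal_ofReal) hmono]
    refine lintegral_congr fun ω => ?_
    rw [hsup ω, Real.norm_eq_abs]
  rw [heq]
  refine lt_of_le_of_lt (iSup_le fun n => ?_) (show ENNReal.ofReal (C+1) < ⊤ from ENNReal.ofReal_lt_top)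
  rw [← ofReal_integral_eq_lintegral_ofReal (hFint n) (ae_of_all _ (hFnonneg n))]
  exact ENNReal.ofReal_le_ofReal ((hC n).trans (by linarith))

lemma integrable_Q_comp {Ω 𝓧 : Type*} [MeasurableSpace Ω] [MeasurableSpace 𝓧]
    (μ : Measure Ω) [IsProbabilityMeasure μ]
    (X : Ω → 𝓧) (hX : Measurable X) (T R : Ω → ℝ) (hT : Measurable T) (hR : Integrable R μ)
    (q p : 𝓧 → ℝ) (hq : Measurable q) (hp : Measurable p)
    (ε : ℝ) (hε : 0 < ε) (hpε : ∀ x, ε ≤ p x) (t : ℝ)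
    (hQt : ∀ h : 𝓧 → ℝ, Measurable h → (∀ x, |h x| ≤ 1) →
      ∫ ω, R ω * (if T ω = t then (1 : ℝ) else 0) * h (X ω) ∂μ
        = ∫ ω, q (X ω) * p (X ω) * h (X ω) ∂μ) :
    Integrable (fun ω => q (X ω)) μ := by
  have hpx : ∀ x, 0 < p x := fun x => lt_of_lt_of_le hε (hpε x)
  refine integrable_of_trunc μ _ (hq.comp hX) ((∫ ω, |R ω| ∂μ) / ε) fun n => ?_
  set u : 𝓧 → ℝ := fun x =>
    ε * ((if 0 ≤ q x then (1:ℝ) else -1) * (if |q x| ≤ (n:ℝ) then 1 else 0)) / p x with hu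
  have hum : Measurable u := by
    refine Measurable.div ?_ hp
    exact measurable_const.mul
      ((Measurable.ite (measurableSet_le measurable_const hq) measurable_const
        measurable_const).mul
       (Measurable.ite (measurableSet_le hq.abs measurable_const) measurable_const
        measurable_const))
  have hub : ∀ x, |u x| ≤ 1 := by
    intro x
    rw [hu]
    simp only
    rw [abs_div, abs_of_pos (hpx x), div_le_one (hpx x), abs_mul, abs_of_pos hε]
    have hs : |(if 0 ≤ q x then (1:ℝ) else -1) * (if |q x| ≤ (n:ℝ) then 1 else 0)| ≤ 1 := by
      rw [abs_mul]; split_ifs <;> norm_num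
    calc ε * |(if 0 ≤ q x then (1:ℝ) else -1) * (if |q x| ≤ (n:ℝ) then 1 else 0)|
        ≤ ε * 1 := mul_le_mul_of_nonneg_left hs hε.le
      _ = ε := mul_one ε
      _ ≤ p x := hpε x
  have hid := hQt u hum hub
  have hrhs : ∫ ω, q (X ω) * p (X ω) * u (X ω) ∂μ
      = ε * ∫ ω, |q (X ω)| * (if |q (X ω)| ≤ (n:ℝ) then 1 else 0) ∂μ := by
    rw [← integral_const_mul]
    refine integral_congr_ae (ae_of_all _ fun ω => ?_)
    set x := X ω
    have hpne : p x ≠ 0 := (hpx x).ne'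
    have hqs : q x * (if 0 ≤ q x then (1:ℝ) else -1) = |q x| := by
      split_ifs with h
      · rw [mul_one, abs_of_nonneg h]
      · rw [abs_of_neg (lt_of_not_ge h)]; ring
    calc q x * p x * u x
        = q x * ((if 0 ≤ q x then (1:ℝ) else -1) * (if |q x| ≤ (n:ℝ) then 1 else 0))
            * (ε * (p x / p x)) := by rw [hu]; ring
      _ = ε * (q x * (if 0 ≤ q x then (1:ℝ) else -1) * (if |q x| ≤ (n:ℝ) then 1 else 0)) := by
            rw [div_self hpne, mul_one]; ring
      _ = ε * (|q x| * (if |q x| ≤ (n:ℝ) then 1 else 0)) := by rw [hqs]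
  have hlhs : ∫ ω, R ω * (if T ω = t then (1:ℝ) else 0) * u (X ω) ∂μ ≤ ∫ ω, |R ω| ∂μ := by
    calc ∫ ω, R ω * (if T ω = t then (1:ℝ) else 0) * u (X ω) ∂μ
        ≤ ‖∫ ω, R ω * (if T ω = t then (1:ℝ) else 0) * u (X ω) ∂μ‖ := le_abs_self _
      _ ≤ ∫ ω, ‖R ω * (if T ω = t then (1:ℝ) else 0) * u (X ω)‖ ∂μ :=
          norm_integral_le_integral_norm _
      _ ≤ ∫ ω, |R ω| ∂μ := by
          refine integral_mono_of_nonneg (ae_of_all _ fun ω => norm_nonneg _) hR.abs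
            (ae_of_all _ fun ω => ?_)
          dsimp only
          rw [Real.norm_eq_abs, abs_mul, abs_mul]
          have h1 : |(if T ω = t then (1:ℝ) else 0)| ≤ 1 := by split_ifs <;> norm_num
          have h2 := hub (X ω)
          calc |R ω| * |(if T ω = t then (1:ℝ) else 0)| * |u (X ω)|
              ≤ |R ω| * 1 * 1 := by
                refine mul_le_mul (mul_le_mul_of_nonneg_left h1 (abs_nonneg _)) h2
                  (abs_nonneg _) (by positivity)
            _ = |R ω| := by ring
  rw [le_div_iff₀ hε]
  calc (∫ ω, |q (X ω)| * (if |q (X ω)| ≤ (n:ℝ) then 1 else 0) ∂μ) * ε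
      = ε * ∫ ω, |q (X ω)| * (if |q (X ω)| ≤ (n:ℝ) then 1 else 0) ∂μ := mul_comm _ _
    _ = ∫ ω, q (X ω) * p (X ω) * u (X ω) ∂μ := hrhs.symm
    _ = ∫ ω, R ω * (if T ω = t then (1:ℝ) else 0) * u (X ω) ∂μ := hid.symm
    _ ≤ ∫ ω, |R ω| ∂μ := hlhs

/-- Fisher consistency / excess-risk representation: with `f*(x) = Q(x,1) - Q(x,-1)` and
nonnegative reward, for any a.s.-nonzero measurable `f`,
`ℛ(f) - ℛ(f*) = E[ |f*(X)| 1{f(X) f*(X) < 0} ] ≥ 0`, where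
`ℛ(f) = E[ R 1{T f(X) < 0} / π(T,X) ]`. -/
theorem bayes_rule_minimizes_weighted_risk
    {Ω 𝓧 : Type*} [MeasurableSpace Ω] [MeasurableSpace 𝓧]
    (μ : Measure Ω) [IsProbabilityMeasure μ]
    (X : Ω → 𝓧) (T : Ω → ℝ) (R : Ω → ℝ)
    (hX : Measurable X) (hT : Measurable T) (hR : Integrable R μ)
    (hTval : ∀ ω, T ω = 1 ∨ T ω = -1)
    (hRpos : ∀ᵐ ω ∂μ, 0 ≤ R ω)
    (π : ℝ → 𝓧 → ℝ) (Q : 𝓧 → ℝ → ℝ)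
    (hπmeas : ∀ t, Measurable (π t)) (hQmeas : ∀ t, Measurable (fun x => Q x t))
    (ε : ℝ) (hε : 0 < ε)
    (hpos : ∀ x, ∀ t : ℝ, (t = 1 ∨ t = -1) → ε ≤ π t x)
    -- π is the conditional probability of T = t given X:
    (hπ : ∀ t : ℝ, (t = 1 ∨ t = -1) → ∀ h : 𝓧 → ℝ, Measurable h → (∀ x, |h x| ≤ 1) →
      ∫ ω, (if T ω = t then (1 : ℝ) else 0) * h (X ω) ∂μ
        = ∫ ω, π t (X ω) * h (X ω) ∂μ)
    -- Q is the conditional mean of R given X and T: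
    (hQ : ∀ t : ℝ, (t = 1 ∨ t = -1) → ∀ h : 𝓧 → ℝ, Measurable h → (∀ x, |h x| ≤ 1) →
      ∫ ω, R ω * (if T ω = t then (1 : ℝ) else 0) * h (X ω) ∂μ
        = ∫ ω, Q (X ω) t * π t (X ω) * h (X ω) ∂μ)
    (fstar : 𝓧 → ℝ) (hfstar : ∀ x, fstar x = Q x 1 - Q x (-1))
    (hfstar_ne : ∀ᵐ ω ∂μ, fstar (X ω) ≠ 0)
    (f : 𝓧 → ℝ) (hf : Measurable f) (hf_ne : ∀ᵐ ω ∂μ, f (X ω) ≠ 0) :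
    (∫ ω, R ω * (if T ω * f (X ω) < 0 then (1 : ℝ) else 0) / π (T ω) (X ω) ∂μ)
      - (∫ ω, R ω * (if T ω * fstar (X ω) < 0 then (1 : ℝ) else 0) / π (T ω) (X ω) ∂μ)
    = (∫ ω, |fstar (X ω)| * (if f (X ω) * fstar (X ω) < 0 then (1 : ℝ) else 0) ∂μ) ∧
    0 ≤ ∫ ω, |fstar (X ω)| * (if f (X ω) * fstar (X ω) < 0 then (1 : ℝ) else 0) ∂μ := by
  have hπ1pos : ∀ x, 0 < π 1 x := fun x => lt_of_lt_of_le hε (hpos x 1 (Or.inl rfl))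
  have hπ2pos : ∀ x, 0 < π (-1) x := fun x => lt_of_lt_of_le hε (hpos x (-1) (Or.inr rfl))
  have hfsm : Measurable fstar := by
    have : fstar = fun x => Q x 1 - Q x (-1) := funext hfstar
    rw [this]; exact (hQmeas 1).sub (hQmeas (-1))
  have hindT : ∀ t : ℝ, Measurable (fun ω => if T ω = t then (1:ℝ) else 0) := fun t =>
    Measurable.ite (hT (measurableSet_singleton t)) measurable_const measurable_const
  have hindTbd : ∀ (t : ℝ) ω, |(if T ω = t then (1:ℝ) else 0)| ≤ 1 := by
    intro t ω; split_ifs <;> norm_num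
  -- key conversion of the risk integral
  have key : ∀ f' : 𝓧 → ℝ, Measurable f' →
      ∫ ω, R ω * (if T ω * f' (X ω) < 0 then (1:ℝ) else 0) / π (T ω) (X ω) ∂μ
        = (∫ ω, Q (X ω) 1 * (if f' (X ω) < 0 then (1:ℝ) else 0) ∂μ)
          + (∫ ω, Q (X ω) (-1) * (if 0 < f' (X ω) then (1:ℝ) else 0) ∂μ) := by
    intro f' hf'
    have mInd1 : Measurable (fun x => if f' x < 0 then (1:ℝ) else 0) :=
      Measurable.ite (measurableSet_lt hf' measurable_const) measurable_const measurable_const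
    have mInd2 : Measurable (fun x => if 0 < f' x then (1:ℝ) else 0) :=
      Measurable.ite (measurableSet_lt measurable_const hf') measurable_const measurable_const
    set h₁ : 𝓧 → ℝ := fun x => ε * (if f' x < 0 then (1:ℝ) else 0) / π 1 x with hh₁
    set h₂ : 𝓧 → ℝ := fun x => ε * (if 0 < f' x then (1:ℝ) else 0) / π (-1) x with hh₂
    have hm₁ : Measurable h₁ := (measurable_const.mul mInd1).div (hπmeas 1)
    have hm₂ : Measurable h₂ := (measurable_const.mul mInd2).div (hπmeas (-1))
    have hb₁ : ∀ x, |h₁ x| ≤ 1 := by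
      intro x
      rw [hh₁]
      simp only
      rw [abs_div, abs_of_pos (hπ1pos x), div_le_one (hπ1pos x), abs_mul, abs_of_pos hε]
      have : |(if f' x < 0 then (1:ℝ) else 0)| ≤ 1 := by split_ifs <;> norm_num
      calc ε * |(if f' x < 0 then (1:ℝ) else 0)| ≤ ε * 1 := mul_le_mul_of_nonneg_left this hε.le
        _ = ε := mul_one ε
        _ ≤ π 1 x := hpos x 1 (Or.inl rfl)
    have hb₂ : ∀ x, |h₂ x| ≤ 1 := by
      intro x
      rw [hh₂]
      simp only
      rw [abs_div, abs_of_pos (hπ2pos x), div_le_one (hπ2pos x), abs_mul, abs_of_pos hε]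
      have : |(if 0 < f' x then (1:ℝ) else 0)| ≤ 1 := by split_ifs <;> norm_num
      calc ε * |(if 0 < f' x then (1:ℝ) else 0)| ≤ ε * 1 := mul_le_mul_of_nonneg_left this hε.le
        _ = ε := mul_one ε
        _ ≤ π (-1) x := hpos x (-1) (Or.inr rfl)
    have hpt : ∀ ω, R ω * (if T ω * f' (X ω) < 0 then (1:ℝ) else 0) / π (T ω) (X ω)
        = (1/ε) * (R ω * (if T ω = 1 then (1:ℝ) else 0) * h₁ (X ω))
          + (1/ε) * (R ω * (if T ω = -1 then (1:ℝ) else 0) * h₂ (X ω)) := by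
      intro ω
      have hne1 : π 1 (X ω) ≠ 0 := (hπ1pos (X ω)).ne'
      have hne2 : π (-1) (X ω) ≠ 0 := (hπ2pos (X ω)).ne'
      rw [hh₁, hh₂]
      simp only
      rcases hTval ω with h | h <;> rw [h] <;> norm_num <;> field_simp <;>
        split_ifs <;> ring
    have hG1 : Integrable (fun ω => R ω * (if T ω = 1 then (1:ℝ) else 0) * h₁ (X ω)) μ :=
      integrable_mul_of_bdd
        (integrable_mul_of_bdd hR (hindT 1).aestronglyMeasurable (hindTbd 1))
        ((hm₁.comp hX).aestronglyMeasurable) (fun ω => hb₁ (X ω))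
    have hG2 : Integrable (fun ω => R ω * (if T ω = -1 then (1:ℝ) else 0) * h₂ (X ω)) μ :=
      integrable_mul_of_bdd
        (integrable_mul_of_bdd hR (hindT (-1)).aestronglyMeasurable (hindTbd (-1)))
        ((hm₂.comp hX).aestronglyMeasurable) (fun ω => hb₂ (X ω))
    have e₁ : ∫ ω, Q (X ω) 1 * π 1 (X ω) * h₁ (X ω) ∂μ
        = ε * ∫ ω, Q (X ω) 1 * (if f' (X ω) < 0 then (1:ℝ) else 0) ∂μ := by
      rw [← integral_const_mul]
      refine integral_congr_ae (ae_of_all _ fun ω => ?_)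
      have hne1 : π 1 (X ω) ≠ 0 := (hπ1pos (X ω)).ne'
      rw [hh₁]
      simp only
      field_simp
    have e₂ : ∫ ω, Q (X ω) (-1) * π (-1) (X ω) * h₂ (X ω) ∂μ
        = ε * ∫ ω, Q (X ω) (-1) * (if 0 < f' (X ω) then (1:ℝ) else 0) ∂μ := by
      rw [← integral_const_mul]
      refine integral_congr_ae (ae_of_all _ fun ω => ?_)
      have hne2 : π (-1) (X ω) ≠ 0 := (hπ2pos (X ω)).ne'
      rw [hh₂]
      simp only
      field_simp
    calc ∫ ω, R ω * (if T ω * f' (X ω) < 0 then (1:ℝ) else 0) / π (T ω) (X ω) ∂μ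
        = ∫ ω, ((1/ε) * (R ω * (if T ω = 1 then (1:ℝ) else 0) * h₁ (X ω))
            + (1/ε) * (R ω * (if T ω = -1 then (1:ℝ) else 0) * h₂ (X ω))) ∂μ :=
          integral_congr_ae (ae_of_all _ hpt)
      _ = (1/ε) * (∫ ω, R ω * (if T ω = 1 then (1:ℝ) else 0) * h₁ (X ω) ∂μ)
          + (1/ε) * (∫ ω, R ω * (if T ω = -1 then (1:ℝ) else 0) * h₂ (X ω) ∂μ) := by
          rw [integral_add (hG1.const_mul _) (hG2.const_mul _), integral_const_mul,
            integral_const_mul]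
      _ = (1/ε) * (∫ ω, Q (X ω) 1 * π 1 (X ω) * h₁ (X ω) ∂μ)
          + (1/ε) * (∫ ω, Q (X ω) (-1) * π (-1) (X ω) * h₂ (X ω) ∂μ) := by
          rw [hQ 1 (Or.inl rfl) h₁ hm₁ hb₁, hQ (-1) (Or.inr rfl) h₂ hm₂ hb₂]
      _ = (∫ ω, Q (X ω) 1 * (if f' (X ω) < 0 then (1:ℝ) else 0) ∂μ)
          + (∫ ω, Q (X ω) (-1) * (if 0 < f' (X ω) then (1:ℝ) else 0) ∂μ) := by
          rw [e₁, e₂]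
          field_simp
  -- integrability of Q ∘ X
  have hQ1int : Integrable (fun ω => Q (X ω) 1) μ :=
    integrable_Q_comp μ X hX T R hT hR (fun x => Q x 1) (π 1) (hQmeas 1) (hπmeas 1)
      ε hε (fun x => hpos x 1 (Or.inl rfl)) 1 (hQ 1 (Or.inl rfl))
  have hQ2int : Integrable (fun ω => Q (X ω) (-1)) μ :=
    integrable_Q_comp μ X hX T R hT hR (fun x => Q x (-1)) (π (-1)) (hQmeas (-1)) (hπmeas (-1))
      ε hε (fun x => hpos x (-1) (Or.inr rfl)) (-1) (hQ (-1) (Or.inr rfl))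
  have indbd : ∀ (a : ℝ) (c : Prop) [Decidable c], |(if c then (1:ℝ) else 0)| ≤ 1 := by
    intro a c _; split_ifs <;> norm_num
  have i1 : Integrable (fun ω => Q (X ω) 1 * (if f (X ω) < 0 then (1:ℝ) else 0)) μ :=
    integrable_mul_of_bdd hQ1int
      (((Measurable.ite (measurableSet_lt hf measurable_const) measurable_const
        measurable_const).comp hX).aestronglyMeasurable) (fun ω => indbd 0 _)
  have i2 : Integrable (fun ω => Q (X ω) (-1) * (if 0 < f (X ω) then (1:ℝ) else 0)) μ :=
    integrable_mul_of_bdd hQ2int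
      (((Measurable.ite (measurableSet_lt measurable_const hf) measurable_const
        measurable_const).comp hX).aestronglyMeasurable) (fun ω => indbd 0 _)
  have i3 : Integrable (fun ω => Q (X ω) 1 * (if fstar (X ω) < 0 then (1:ℝ) else 0)) μ :=
    integrable_mul_of_bdd hQ1int
      (((Measurable.ite (measurableSet_lt hfsm measurable_const) measurable_const
        measurable_const).comp hX).aestronglyMeasurable) (fun ω => indbd 0 _)
  have i4 : Integrable (fun ω => Q (X ω) (-1) * (if 0 < fstar (X ω) then (1:ℝ) else 0)) μ :=
    integrable_mul_of_bdd hQ2int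
      (((Measurable.ite (measurableSet_lt measurable_const hfsm) measurable_const
        measurable_const).comp hX).aestronglyMeasurable) (fun ω => indbd 0 _)
  constructor
  · have hadd1 : (∫ ω, (Q (X ω) 1 * (if f (X ω) < 0 then (1:ℝ) else 0)
          + Q (X ω) (-1) * (if 0 < f (X ω) then (1:ℝ) else 0)) ∂μ)
        = (∫ ω, Q (X ω) 1 * (if f (X ω) < 0 then (1:ℝ) else 0) ∂μ)
          + (∫ ω, Q (X ω) (-1) * (if 0 < f (X ω) then (1:ℝ) else 0) ∂μ) := integral_add i1 i2
    have hadd2 : (∫ ω, (Q (X ω) 1 * (if fstar (X ω) < 0 then (1:ℝ) else 0)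
          + Q (X ω) (-1) * (if 0 < fstar (X ω) then (1:ℝ) else 0)) ∂μ)
        = (∫ ω, Q (X ω) 1 * (if fstar (X ω) < 0 then (1:ℝ) else 0) ∂μ)
          + (∫ ω, Q (X ω) (-1) * (if 0 < fstar (X ω) then (1:ℝ) else 0) ∂μ) := integral_add i3 i4
    have hsub : (∫ ω, ((Q (X ω) 1 * (if f (X ω) < 0 then (1:ℝ) else 0)
          + Q (X ω) (-1) * (if 0 < f (X ω) then (1:ℝ) else 0))
          - (Q (X ω) 1 * (if fstar (X ω) < 0 then (1:ℝ) else 0)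
          + Q (X ω) (-1) * (if 0 < fstar (X ω) then (1:ℝ) else 0))) ∂μ)
        = (∫ ω, (Q (X ω) 1 * (if f (X ω) < 0 then (1:ℝ) else 0)
          + Q (X ω) (-1) * (if 0 < f (X ω) then (1:ℝ) else 0)) ∂μ)
          - (∫ ω, (Q (X ω) 1 * (if fstar (X ω) < 0 then (1:ℝ) else 0)
          + Q (X ω) (-1) * (if 0 < fstar (X ω) then (1:ℝ) else 0)) ∂μ) :=
      integral_sub (i1.add i2) (i3.add i4)
    rw [key f hf, key fstar hfsm, ← hadd1, ← hadd2, ← hsub]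
    refine integral_congr_ae ?_
    filter_upwards [hf_ne, hfstar_ne] with ω ha hb
    have hbeq := hfstar (X ω)
    rcases ha.lt_or_gt with h1 | h1 <;> rcases hb.lt_or_gt with h2 | h2
    · rw [if_pos h1, if_neg (not_lt.mpr h1.le), if_pos h2, if_neg (not_lt.mpr h2.le),
        if_neg (not_lt.mpr (mul_pos_of_neg_of_neg h1 h2).le)]
      ring
    · rw [if_pos h1, if_neg (not_lt.mpr h1.le), if_neg (asymm h2), if_pos h2,
        if_pos (mul_neg_of_neg_of_pos h1 h2), abs_of_pos h2]
      linarith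
    · rw [if_neg (asymm h1), if_pos h1, if_pos h2, if_neg (not_lt.mpr h2.le),
        if_pos (mul_neg_of_pos_of_neg h1 h2), abs_of_neg h2]
      linarith
    · rw [if_neg (asymm h1), if_pos h1, if_neg (asymm h2), if_pos h2,
        if_neg (not_lt.mpr (mul_pos h1 h2).le)]
      ring
  · exact integral_nonneg fun ω => mul_nonneg (abs_nonneg _) (by split_ifs <;> norm_num)
end

section
/- Define the modified reward $\tilde{r}(\kappa, f') = r + \kappa\, \pi(t, x)\, \mathrm{sign}\{t f'(x)\}$ for $t \in \{-1,1\}$, $\kappa \geq 0$, and $f'(x) \neq 0$. Then the pointwise identity holds: $\frac{r\, \mathbb{1}\{t f(x) < 0\}}{\pi(t,x)} + \kappa\, \mathbb{1}\{f(x) f'(x) < 0\} = \frac{\tilde{r}(\kappa, f')\, \mathbb{1}\{t f(x) < 0\}}{\pi(t,x)} + \kappa\, \mathbb{1}\{t f'(x) < 0\}$, for any $f$ with $f(x) \neq 0$. -/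
/-- Sign function: 1 if u > 0, -1 if u < 0. -/
noncomputable def sgn (u : ℝ) : ℝ := if 0 < u then 1 else -1

/-- Modified-reward identity: with `r̃ = r + κ π(t,x) sign(t f'(x))`,
`r 1{t f(x)<0}/π(t,x) + κ 1{f(x) f'(x)<0} = r̃ 1{t f(x)<0}/π(t,x) + κ 1{t f'(x)<0}`. -/
theorem modified_reward_identity
    {𝓧 : Type*} (π : ℝ → 𝓧 → ℝ) (f f' : 𝓧 → ℝ) (x : 𝓧)
    (r κ t : ℝ) (ht : t = 1 ∨ t = -1) (hκ : 0 ≤ κ)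
    (hπ : 0 < π t x) (hf : f x ≠ 0) (hf' : f' x ≠ 0) :
    r * (if t * f x < 0 then (1 : ℝ) else 0) / π t x
        + κ * (if f x * f' x < 0 then (1 : ℝ) else 0)
      = (r + κ * π t x * sgn (t * f' x)) * (if t * f x < 0 then (1 : ℝ) else 0) / π t x
        + κ * (if t * f' x < 0 then (1 : ℝ) else 0) := by
  have hπ' := hπ.ne'
  rcases hf.lt_or_gt with h1 | h1 <;> rcases hf'.lt_or_gt with h2 | h2 <;>
    rcases ht with rfl | rfl <;>
    simp [sgn, mul_pos_iff, mul_neg_iff, h1, h2, h1.not_gt, h2.not_gt, asymm h1, asymm h2,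
      hπ'] <;>
    field_simp <;> ring
end

section
/- Suppose the excess risk admits the bound $E(\lambda, \sigma) = C\left(\lambda^{-1/2} K \sigma^{\gamma p/4} n^{-1/2} + \lambda \sigma^p + K \sigma^{-qp}\right)$ for constants $C, K, \gamma, q, p > 0$ and sample size $n$. Then choosing $\lambda = \lambda_n$ and $\sigma = \sigma_n$ appropriately (with $\lambda$ balancing the first two terms) yields $\inf_{\lambda, \sigma > 0} E(\lambda, \sigma) \leq C' K^{\frac{2+4q+\gamma}{2+6q+\gamma}} n^{-\frac{q}{2+6q+\gamma}}$ for some constant $C'$ depending only on $C, \gamma, q, p$. -/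
open Real

/-- Optimizing the tuning parameters in the three-term excess-risk bound
`E(λ,σ) = C(λ^{-1/2} K σ^{γp/4} n^{-1/2} + λ σ^p + K σ^{-qp})` yields the rate
`C' K^{(2+4q+γ)/(2+6q+γ)} n^{-q/(2+6q+γ)}`, with `C'` depending only on `C, γ, q, p`. -/
theorem tuning_parameter_optimization
    (C γ q p : ℝ) (hC : 0 < C) (hγ : 0 < γ) (hq : 0 < q) (hp : 0 < p) :
    ∃ C' : ℝ, 0 < C' ∧ ∀ K : ℝ, 0 < K → ∀ n : ℕ, 0 < n →
      ∃ lam σ : ℝ, 0 < lam ∧ 0 < σ ∧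
        C * (lam ^ (-(1:ℝ)/2) * K * σ ^ (γ * p / 4) * (n : ℝ) ^ (-(1:ℝ)/2)
            + lam * σ ^ (p : ℝ) + K * σ ^ (-(q * p)))
          ≤ C' * K ^ ((2 + 4*q + γ) / (2 + 6*q + γ))
              * (n : ℝ) ^ (-(q / (2 + 6*q + γ))) := by
  refine ⟨3 * C, by positivity, ?_⟩
  intro K hK n hn
  have hn' : (0:ℝ) < (n:ℝ) := by exact_mod_cast hn
  have hn1 : (1:ℝ) ≤ (n:ℝ) := by exact_mod_cast hn
  have hD0 : (0:ℝ) < 2 + 6*q + γ := by linarith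
  set D : ℝ := 2 + 6*q + γ with hDdef
  have hA : (0:ℝ) < K * n := by positivity
  set L : ℝ := Real.log K with hL
  set M : ℝ := Real.log (n:ℝ) with hM
  have hM0 : 0 ≤ M := Real.log_nonneg hn1
  have hlogA : Real.log (K * n) = L + M := Real.log_mul hK.ne' hn'.ne'
  -- choices
  set lam : ℝ := (Real.exp ((2/3)*L + ((γ-4)/(3*D))*(L+M) + (-(1:ℝ)/3)*M)) with hlam
  set σ : ℝ := (Real.exp ((2/(D*p))*(L+M))) with hσ
  refine ⟨lam, σ, Real.exp_pos _, Real.exp_pos _, ?_⟩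
  have hexp : ∀ x y : ℝ, (Real.exp x) ^ y = Real.exp (x * y) := by
    intro x y
    rw [Real.rpow_def_of_pos (Real.exp_pos x), Real.log_exp]
  have hKexp : K = Real.exp L := (Real.exp_log hK).symm
  have hnexp : ((n:ℝ)) ^ (-(1:ℝ)/2) = Real.exp (M * (-(1:ℝ)/2)) := by
    rw [Real.rpow_def_of_pos hn']
  have hnexp2 : ((n:ℝ)) ^ (-(q/D)) = Real.exp (M * (-(q/D))) := by
    rw [Real.rpow_def_of_pos hn']
  have hKexp2 : K ^ ((2 + 4*q + γ)/D) = Real.exp (L * ((2 + 4*q + γ)/D)) := by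
    rw [Real.rpow_def_of_pos hK]
  have hDne : D ≠ 0 := hD0.ne'
  have hpne : p ≠ 0 := hp.ne'
  -- each term ≤ T := exp (L * ((2+4q+γ)/D) + M * (-(q/D)))
  have hTval : K ^ ((2 + 4*q + γ)/D) * (n:ℝ) ^ (-(q/D))
      = Real.exp (L * ((2 + 4*q + γ)/D) + M * (-(q/D))) := by
    rw [hKexp2, hnexp2, ← Real.exp_add]
  have hterm : ∀ x : ℝ, x = L * ((2 + 4*q + γ)/D) + M * (-(2*q/D)) →
      Real.exp x ≤ Real.exp (L * ((2 + 4*q + γ)/D) + M * (-(q/D))) := by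
    intro x hx
    rw [Real.exp_le_exp, hx]
    have hqd : 0 < q / D := div_pos hq hD0
    have h2 : -(2*q/D) ≤ -(q/D) := by
      rw [show 2*q/D = 2*(q/D) by ring]; linarith
    have := mul_le_mul_of_nonneg_left h2 hM0
    linarith
  have h1 : lam ^ (-(1:ℝ)/2) * K * σ ^ (γ * p / 4) * (n : ℝ) ^ (-(1:ℝ)/2)
      ≤ Real.exp (L * ((2 + 4*q + γ)/D) + M * (-(q/D))) := by
    rw [hlam, hσ, hexp, hexp, hnexp, hKexp, ← Real.exp_add, ← Real.exp_add,
      ← Real.exp_add]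
    apply hterm
    rw [hDdef]
    field_simp
    ring
  have h2 : lam * σ ^ (p:ℝ)
      ≤ Real.exp (L * ((2 + 4*q + γ)/D) + M * (-(q/D))) := by
    rw [hlam, hσ, hexp, ← Real.exp_add]
    apply hterm
    rw [hDdef]
    field_simp
    ring
  have h3 : K * σ ^ (-(q * p))
      ≤ Real.exp (L * ((2 + 4*q + γ)/D) + M * (-(q/D))) := by
    rw [hσ, hexp, hKexp, ← Real.exp_add]
    apply hterm
    rw [hDdef]
    field_simp
    ring
  calc C * (lam ^ (-(1:ℝ)/2) * K * σ ^ (γ * p / 4) * (n : ℝ) ^ (-(1:ℝ)/2)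
        + lam * σ ^ (p:ℝ) + K * σ ^ (-(q * p)))
      ≤ C * (Real.exp (L * ((2 + 4*q + γ)/D) + M * (-(q/D)))
          + Real.exp (L * ((2 + 4*q + γ)/D) + M * (-(q/D)))
          + Real.exp (L * ((2 + 4*q + γ)/D) + M * (-(q/D)))) :=
        mul_le_mul_of_nonneg_left (by linarith) hC.le
    _ = 3 * C * K ^ ((2 + 4*q + γ)/D) * (n:ℝ) ^ (-(q/D)) := by
        rw [← hTval]; ring
end
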